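/- Let π : S̃ → S be a covering map of topological spaces, and let φ̃ : S̃ → S̃ and φ : S → S be homeomorphisms satisfying the commutativity relation π ∘ φ̃ = φ ∘ π. Then the map S̃ × ℝ → S × ℝ given by (x, t) ↦ (π(x), t) descends to a well-defined continuous map P between the mapping torus of φ̃ and the mapping torus of φ, and this induced map P is a covering map. -/

import Mathlib

/-- The ℤ-action on `S × ℝ`: `n • (x, t) = (φ^n x, t - n)`. -/
def mappingTorusAct {S : Type*} [TopologicalSpace S] (φ : S ≃ₜ S) (n : ℤ) (p : S × ℝ) :
    S × ℝ :=
  ((φ.toEquiv ^ n) p.1, p.2 - n)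

lemma mappingTorusAct_add {S : Type*} [TopologicalSpace S] (φ : S ≃ₜ S) (m n : ℤ)
    (p : S × ℝ) :
    mappingTorusAct φ m (mappingTorusAct φ n p) = mappingTorusAct φ (m + n) p := by
  unfold mappingTorusAct
  refine Prod.ext ?_ ?_
  · simp [zpow_add, Equiv.Perm.mul_apply]
  · push_cast
    ring

/-- The orbit equivalence relation of the ℤ-action on `S × ℝ`. -/
def mappingTorusSetoid {S : Type*} [TopologicalSpace S] (φ : S ≃ₜ S) : Setoid (S × ℝ) where
  r p q := ∃ n : ℤ, mappingTorusAct φ n p = q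
  iseqv := by
    constructor
    · exact fun p => ⟨0, by simp [mappingTorusAct]⟩
    · rintro p q ⟨n, rfl⟩
      exact ⟨-n, by rw [mappingTorusAct_add]; simp [mappingTorusAct]⟩
    · rintro p q r ⟨n, rfl⟩ ⟨m, rfl⟩
      exact ⟨m + n, (mappingTorusAct_add φ m n p).symm⟩

/-- The mapping torus of a self-homeomorphism `φ : S ≃ₜ S`. -/
def MappingTorus {S : Type*} [TopologicalSpace S] (φ : S ≃ₜ S) : Type _ :=
  Quotient (mappingTorusSetoid φ)

instance {S : Type*} [TopologicalSpace S] (φ : S ≃ₜ S) :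
    TopologicalSpace (MappingTorus φ) :=
  inferInstanceAs (TopologicalSpace (Quotient (mappingTorusSetoid φ)))

namespace MTAux

variable {E S : Type*} [TopologicalSpace E] [TopologicalSpace S]

lemma continuous_zpow (φ : S ≃ₜ S) (n : ℤ) : Continuous fun x => (φ.toEquiv ^ n) x := by
  induction n using Int.induction_on with
  | zero => simpa using continuous_id'
  | succ k ih =>
      have h : ∀ x : S, (φ.toEquiv ^ ((k : ℤ) + 1)) x = φ ((φ.toEquiv ^ (k : ℤ)) x) := by
        intro x
        rw [add_comm, zpow_add, zpow_one]
        rfl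
      simpa only [h] using φ.continuous.comp' ih
  | pred k ih =>
      have h : ∀ x : S, (φ.toEquiv ^ (-(k : ℤ) - 1)) x = φ.symm ((φ.toEquiv ^ (-(k : ℤ))) x) := by
        intro x
        rw [sub_eq_add_neg, add_comm, zpow_add, zpow_neg_one]
        rfl
      simpa only [h] using φ.symm.continuous.comp' ih

lemma act_continuous (φ : S ≃ₜ S) (n : ℤ) : Continuous (mappingTorusAct φ n) :=
  ((continuous_zpow φ n).comp continuous_fst).prodMk (continuous_snd.sub continuous_const)

lemma act_zero (φ : S ≃ₜ S) (p : S × ℝ) : mappingTorusAct φ 0 p = p := by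
  simp [mappingTorusAct]

lemma act_snd (φ : S ≃ₜ S) (n : ℤ) (p : S × ℝ) :
    (mappingTorusAct φ n p).2 = p.2 - n := rfl

lemma mk_act (φ : S ≃ₜ S) (n : ℤ) (p : S × ℝ) :
    Quotient.mk (mappingTorusSetoid φ) (mappingTorusAct φ n p)
      = Quotient.mk (mappingTorusSetoid φ) p :=
  (Quotient.sound (⟨n, rfl⟩ : (mappingTorusSetoid φ).r p (mappingTorusAct φ n p))).symm

lemma continuous_mk (φ : S ≃ₜ S) :
    Continuous (Quotient.mk (mappingTorusSetoid φ) : S × ℝ → MappingTorus φ) :=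
  continuous_quot_mk

lemma isOpenMap_mk (φ : S ≃ₜ S) :
    IsOpenMap (Quotient.mk (mappingTorusSetoid φ) : S × ℝ → MappingTorus φ) := by
  intro U hU
  have key : Quotient.mk (mappingTorusSetoid φ) ⁻¹' (Quotient.mk (mappingTorusSetoid φ) '' U)
      = ⋃ n : ℤ, mappingTorusAct φ n ⁻¹' U := by
    ext p
    simp only [Set.mem_preimage, Set.mem_image, Set.mem_iUnion]
    constructor
    · rintro ⟨u, hu, h⟩
      obtain ⟨n, hn⟩ := Quotient.exact h
      refine ⟨-n, ?_⟩
      rw [← hn, mappingTorusAct_add, neg_add_cancel, act_zero]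
      exact hu
    · rintro ⟨n, hn⟩
      exact ⟨mappingTorusAct φ n p, hn, mk_act φ n p⟩
  have : IsOpen (Quotient.mk (mappingTorusSetoid φ) ⁻¹'
      (Quotient.mk (mappingTorusSetoid φ) '' U)) := by
    rw [key]
    exact isOpen_iUnion fun n => hU.preimage (act_continuous φ n)
  exact isOpen_coinduced.mpr this

lemma strip_inj (φ : S ≃ₜ S) {a : ℝ} {p q : S × ℝ}
    (hp : p.2 ∈ Set.Ico a (a + 1)) (hq : q.2 ∈ Set.Ico a (a + 1))
    (h : Quotient.mk (mappingTorusSetoid φ) p = Quotient.mk (mappingTorusSetoid φ) q) :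
    p = q := by
  obtain ⟨n, hn⟩ := Quotient.exact h
  have h2 : p.2 - n = q.2 := congrArg Prod.snd hn
  have hn0 : n = 0 := by
    have h1 : -1 < (n : ℝ) := by
      have := hp.1; have := hq.2; linarith
    have h3 : (n : ℝ) < 1 := by
      have := hp.2; have := hq.1; linarith
    have h1' : (-1 : ℤ) < n := by exact_mod_cast h1
    have h3' : n < 1 := by exact_mod_cast h3
    omega
  rw [← hn, hn0, act_zero]

/-- canonical representative with second coordinate in `Ico (t₀ - 2⁻¹) (t₀ + 2⁻¹)`. -/
noncomputable def rep (φ : S ≃ₜ S) (t₀ : ℝ) (e : MappingTorus φ) : S × ℝ :=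
  mappingTorusAct φ ⌊(Quotient.out e).2 - t₀ + 2⁻¹⌋ (Quotient.out e)

lemma mk_rep (φ : S ≃ₜ S) (t₀ : ℝ) (e : MappingTorus φ) :
    Quotient.mk (mappingTorusSetoid φ) (rep φ t₀ e) = e := by
  rw [rep, mk_act]
  exact Quotient.out_eq e

lemma rep_mk (φ : S ≃ₜ S) (t₀ : ℝ) (p : S × ℝ) :
    rep φ t₀ (Quotient.mk (mappingTorusSetoid φ) p)
      = mappingTorusAct φ ⌊p.2 - t₀ + 2⁻¹⌋ p := by
  obtain ⟨m, hm⟩ := Quotient.exact (Quotient.out_eq (Quotient.mk (mappingTorusSetoid φ) p))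
  set o := Quotient.out (Quotient.mk (mappingTorusSetoid φ) p) with ho
  unfold rep
  rw [← ho, ← hm, act_snd]
  have hfl : ⌊o.2 - m - t₀ + 2⁻¹⌋ = ⌊o.2 - t₀ + 2⁻¹⌋ - m := by
    rw [show o.2 - m - t₀ + 2⁻¹ = (o.2 - t₀ + 2⁻¹) - m by ring]
    exact Int.floor_sub_intCast _ _
  rw [hfl, mappingTorusAct_add, sub_add_cancel]

lemma rep_snd_mem (φ : S ≃ₜ S) (t₀ : ℝ) (e : MappingTorus φ) :
    (rep φ t₀ e).2 ∈ Set.Ico (t₀ - 2⁻¹) (t₀ + 2⁻¹) := by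
  rw [rep, act_snd]
  set u := (Quotient.out e).2
  have h1 := Int.floor_le (u - t₀ + 2⁻¹)
  have h2 := Int.lt_floor_add_one (u - t₀ + 2⁻¹)
  constructor <;> [linarith; linarith]

lemma rep_mk_of_mem (φ : S ≃ₜ S) {t₀ : ℝ} {p : S × ℝ}
    (hp : p.2 ∈ Set.Ioo (t₀ - 2⁻¹) (t₀ + 2⁻¹)) :
    rep φ t₀ (Quotient.mk (mappingTorusSetoid φ) p) = p := by
  rw [rep_mk]
  have : ⌊p.2 - t₀ + 2⁻¹⌋ = 0 := by
    rw [Int.floor_eq_zero_iff]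
    constructor
    · have := hp.1; linarith
    · have := hp.2; linarith
  rw [this, act_zero]

lemma continuousAt_descend {A B Z : Type*} [TopologicalSpace A] [TopologicalSpace B]
    [TopologicalSpace Z] {q : A → B} (hqo : IsOpenMap q)
    {g : A → Z} {U : Set A} (hU : IsOpen U) (hg : ContinuousOn g U)
    {f : B → Z} (hfg : ∀ a ∈ U, f (q a) = g a) {a : A} (ha : a ∈ U) :
    ContinuousAt f (q a) := by
  intro O hO
  rw [hfg a ha] at hO
  have hga : ContinuousAt g a := hg.continuousAt (hU.mem_nhds ha)
  have h1 : g ⁻¹' O ∩ U ∈ nhds a := Filter.inter_mem (hga hO) (hU.mem_nhds ha)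
  obtain ⟨V, hVsub, hVopen, haV⟩ := mem_nhds_iff.mp h1
  rw [Filter.mem_map]
  refine Filter.mem_of_superset ((hqo V hVopen).mem_nhds ⟨a, haV, rfl⟩) ?_
  rintro _ ⟨v, hv, rfl⟩
  rw [Set.mem_preimage, hfg v (hVsub hv).2]
  exact (hVsub hv).1

lemma comm_zpow (π : E → S) (φE : E ≃ₜ E) (φ : S ≃ₜ S) (hcomm : π ∘ φE = φ ∘ π) (n : ℤ)
    (x : E) : π ((φE.toEquiv ^ n) x) = (φ.toEquiv ^ n) (π x) := by
  have h1 : ∀ y, π (φE y) = φ (π y) := fun y => congrFun hcomm y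
  have h2 : ∀ y, π (φE.symm y) = φ.symm (π y) := by
    intro y
    have := h1 (φE.symm y)
    rw [Homeomorph.apply_symm_apply] at this
    calc π (φE.symm y) = φ.symm (φ (π (φE.symm y))) := (φ.symm_apply_apply _).symm
      _ = φ.symm (π y) := by rw [← this]
  induction n using Int.induction_on with
  | zero => simp
  | succ k ih =>
      have hE : ∀ y : E, (φE.toEquiv ^ ((k : ℤ) + 1)) y = φE ((φE.toEquiv ^ (k : ℤ)) y) := by
        intro y; rw [add_comm, zpow_add, zpow_one]; rfl
      have hS : ∀ y : S, (φ.toEquiv ^ ((k : ℤ) + 1)) y = φ ((φ.toEquiv ^ (k : ℤ)) y) := by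
        intro y; rw [add_comm, zpow_add, zpow_one]; rfl
      rw [hE, hS, h1, ih]
  | pred k ih =>
      have hE : ∀ y : E, (φE.toEquiv ^ (-(k : ℤ) - 1)) y = φE.symm ((φE.toEquiv ^ (-(k : ℤ))) y) := by
        intro y; rw [sub_eq_add_neg, add_comm, zpow_add, zpow_neg_one]; rfl
      have hS : ∀ y : S, (φ.toEquiv ^ (-(k : ℤ) - 1)) y = φ.symm ((φ.toEquiv ^ (-(k : ℤ))) y) := by
        intro y; rw [sub_eq_add_neg, add_comm, zpow_add, zpow_neg_one]; rfl
      rw [hE, hS, h2, ih]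

end MTAux

/-- If `π : E → S` is a covering map and `φE`, `φ` are self-homeomorphisms
with `π ∘ φE = φ ∘ π`, then `(x, t) ↦ (π x, t)` descends to a well-defined continuous map
between the mapping tori, and this induced map is a covering map. -/
theorem mappingTorus_inducedMap_isCoveringMap
    {E S : Type*} [TopologicalSpace E] [TopologicalSpace S]
    (π : E → S) (hπ : IsCoveringMap π)
    (φE : E ≃ₜ E) (φ : S ≃ₜ S)
    (hcomm : π ∘ φE = φ ∘ π) :
    ∃ P : MappingTorus φE → MappingTorus φ,
      (∀ (x : E) (t : ℝ),
        P (Quotient.mk (mappingTorusSetoid φE) (x, t)) =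
          Quotient.mk (mappingTorusSetoid φ) (π x, t)) ∧
      Continuous P ∧ IsCoveringMap P := by
  classical
  have hwd : ∀ a b : E × ℝ, (mappingTorusSetoid φE).r a b → (Quotient.mk (mappingTorusSetoid φ)) (π a.1, a.2) = (Quotient.mk (mappingTorusSetoid φ)) (π b.1, b.2) := by
    rintro a b ⟨n, rfl⟩
    show (Quotient.mk (mappingTorusSetoid φ)) (π a.1, a.2) = (Quotient.mk (mappingTorusSetoid φ)) (π ((φE.toEquiv ^ n) a.1), a.2 - n)
    rw [MTAux.comm_zpow π φE φ hcomm n a.1]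
    exact (MTAux.mk_act φ n (π a.1, a.2)).symm
  set P : MappingTorus φE → MappingTorus φ :=
    Quotient.lift (fun p : E × ℝ => (Quotient.mk (mappingTorusSetoid φ)) (π p.1, p.2)) hwd with hP
  have hPmk : ∀ p : E × ℝ, P ((Quotient.mk (mappingTorusSetoid φE)) p) = (Quotient.mk (mappingTorusSetoid φ)) (π p.1, p.2) := fun p => rfl
  have hPcont : Continuous P :=
    Continuous.quotient_lift
      ((MTAux.continuous_mk φ).comp
        ((hπ.continuous.comp continuous_fst).prodMk continuous_snd)) hwd
  refine ⟨P, fun x t => rfl, hPcont, ?_⟩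
  intro b
  obtain ⟨p₀, rfl⟩ := Quotient.exists_rep b
  have hev := hπ p₀.1
  have hd : DiscreteTopology ↑(π ⁻¹' {p₀.1}) := hev.1
  rcases isEmpty_or_nonempty ↑(π ⁻¹' {p₀.1}) with hempty | hne
  · obtain ⟨-, U, hxU, hU, hfU, H, -⟩ := hev
    refine IsEvenlyCovered.to_isEvenlyCovered_preimage (I := Empty)
      (IsEvenlyCovered.of_preimage_eq_empty Empty
        (U := Quotient.mk (mappingTorusSetoid φ) '' (U ×ˢ Set.univ)) ?_ ?_)
    · exact (MTAux.isOpenMap_mk φ _ (hU.prod isOpen_univ)).mem_nhds ⟨p₀, ⟨hxU, trivial⟩, rfl⟩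
    · refine Set.eq_empty_iff_forall_notMem.mpr fun e he => ?_
      obtain ⟨q, rfl⟩ := Quotient.exists_rep e
      obtain ⟨u, ⟨hu, -⟩, huq⟩ := he
      rw [hPmk] at huq
      obtain ⟨n, hn⟩ := Quotient.exact huq
      have h1 : mappingTorusAct φ (-n) (π q.1, q.2) = u := by
        rw [← hn, mappingTorusAct_add, neg_add_cancel, MTAux.act_zero]
      have h2 : π ((φE.toEquiv ^ (-n)) q.1) ∈ U := by
        rw [MTAux.comm_zpow π φE φ hcomm]
        rw [← h1] at hu
        exact hu
      exact hempty.elim (H ⟨_, h2⟩).2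
  obtain ⟨T, hT⟩ : ∃ T : Bundle.Trivialization (π ⁻¹' {p₀.1}) π, p₀.1 ∈ T.baseSet :=
    ⟨hev.toTrivialization, hev.mem_toTrivialization_baseSet⟩
  set t₀ : ℝ := p₀.2 with ht₀
  set I : Set ℝ := Set.Ioo (t₀ - 2⁻¹) (t₀ + 2⁻¹) with hI
  set W : Set (MappingTorus φ) := (Quotient.mk (mappingTorusSetoid φ)) '' (T.baseSet ×ˢ I) with hW
  have hWopen : IsOpen W := MTAux.isOpenMap_mk φ _ (T.open_baseSet.prod isOpen_Ioo)
  -- canonical representatives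
  have hIco : ∀ t : ℝ, t ∈ I → t ∈ Set.Ico (t₀ - 2⁻¹) ((t₀ - 2⁻¹) + 1) := by
    rintro t ⟨h1, h2⟩
    exact ⟨le_of_lt h1, by linarith⟩
  have hIco' : ∀ t : ℝ, t ∈ Set.Ico (t₀ - 2⁻¹) (t₀ + 2⁻¹) →
      t ∈ Set.Ico (t₀ - 2⁻¹) ((t₀ - 2⁻¹) + 1) := by
    rintro t ⟨h1, h2⟩
    exact ⟨h1, by linarith⟩
  -- membership of W via canonical representative
  have hrepW : ∀ w : MappingTorus φ, w ∈ W →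
      (MTAux.rep φ t₀ w).1 ∈ T.baseSet ∧ (MTAux.rep φ t₀ w).2 ∈ I := by
    rintro w ⟨u, ⟨hu1, hu2⟩, rfl⟩
    rw [MTAux.rep_mk_of_mem φ hu2]
    exact ⟨hu1, hu2⟩
  -- analysis of the source
  have hsrc : ∀ e : MappingTorus φE, P e ∈ W →
      π (MTAux.rep φE t₀ e).1 ∈ T.baseSet ∧ (MTAux.rep φE t₀ e).2 ∈ I := by
    intro e he
    have hPe : P e = (Quotient.mk (mappingTorusSetoid φ)) (π (MTAux.rep φE t₀ e).1, (MTAux.rep φE t₀ e).2) := by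
      conv_lhs => rw [← MTAux.mk_rep φE t₀ e]
      exact hPmk _
    rw [hPe] at he
    obtain ⟨u, ⟨hu1, hu2⟩, hu3⟩ := he
    have heq := MTAux.strip_inj φ (hIco u.2 hu2)
      (hIco' _ (MTAux.rep_snd_mem φE t₀ e)) hu3
    rw [heq] at hu1 hu2
    exact ⟨hu1, hu2⟩
  set F := ↥(π ⁻¹' {p₀.1})
  set toF : MappingTorus φE → MappingTorus φ × F :=
    fun e => (P e, (T (MTAux.rep φE t₀ e).1).2) with htoF
  set invF : MappingTorus φ × F → MappingTorus φE :=
    fun w => (Quotient.mk (mappingTorusSetoid φE)) (T.toOpenPartialHomeomorph.symm ((MTAux.rep φ t₀ w.1).1, w.2),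
      (MTAux.rep φ t₀ w.1).2) with hinvF
  have hmem_source : ∀ x : E, π x ∈ T.baseSet → x ∈ T.source :=
    fun x hx => T.mem_source.mpr hx
  refine IsEvenlyCovered.to_isEvenlyCovered_preimage (I := F)
    (IsEvenlyCovered.of_trivialization (t := ?_) ?_)
  · -- the trivialization
    refine ⟨⟨⟨⟨toF, invF, P ⁻¹' W, W ×ˢ Set.univ, ?_, ?_, ?_, ?_⟩, ?_, ?_⟩, ?_, ?_⟩,
      W, hWopen, rfl, rfl, fun e _ => rfl⟩
    · -- map_source'
      intro e he
      exact ⟨he, Set.mem_univ _⟩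
    · -- map_target'
      rintro ⟨w, i⟩ ⟨hw, -⟩
      obtain ⟨hb, hi⟩ := hrepW w hw
      show P ((Quotient.mk (mappingTorusSetoid φE)) _) ∈ W
      rw [hPmk, T.proj_symm_apply' hb]
      have : (Quotient.mk (mappingTorusSetoid φ)) ((MTAux.rep φ t₀ w).1, (MTAux.rep φ t₀ w).2) = w := by
        rw [show ((MTAux.rep φ t₀ w).1, (MTAux.rep φ t₀ w).2) = MTAux.rep φ t₀ w from rfl,
          MTAux.mk_rep]
      rw [this]
      exact hw
    · -- left_inv'
      intro e he
      obtain ⟨hb, hi⟩ := hsrc e he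
      set p := MTAux.rep φE t₀ e with hp
      have hPe : P e = (Quotient.mk (mappingTorusSetoid φ)) (π p.1, p.2) := by
        conv_lhs => rw [← MTAux.mk_rep φE t₀ e]
        exact hPmk _
      show invF (P e, (T p.1).2) = e
      rw [hinvF]
      simp only
      rw [hPe, MTAux.rep_mk_of_mem φ (p := (π p.1, p.2)) hi]
      have hsymm : T.toOpenPartialHomeomorph.symm (π p.1, (T p.1).2) = p.1 :=
        T.symm_apply_mk_proj (hmem_source p.1 hb)
      rw [hsymm]
      show (Quotient.mk (mappingTorusSetoid φE)) (p.1, p.2) = e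
      rw [show (p.1, p.2) = p from rfl, hp, MTAux.mk_rep]
    · -- right_inv'
      rintro ⟨w, i⟩ ⟨hw, -⟩
      obtain ⟨hb, hi⟩ := hrepW w hw
      set s := (MTAux.rep φ t₀ w).1 with hs
      set t := (MTAux.rep φ t₀ w).2 with ht
      set y := T.toOpenPartialHomeomorph.symm (s, i) with hy
      have hπy : π y = s := T.proj_symm_apply' hb
      show toF ((Quotient.mk (mappingTorusSetoid φE)) (y, t)) = (w, i)
      have hrepE : MTAux.rep φE t₀ ((Quotient.mk (mappingTorusSetoid φE)) (y, t)) = (y, t) :=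
        MTAux.rep_mk_of_mem φE hi
      rw [htoF]
      simp only [hrepE, hPmk, hπy]
      have hTy : T y = (s, i) := by
        rw [hy]
        exact T.toOpenPartialHomeomorph.right_inv (T.mem_target.mpr hb)
      have hqst : (Quotient.mk (mappingTorusSetoid φ)) (s, t) = w := by
        rw [show (s, t) = MTAux.rep φ t₀ w from rfl, MTAux.mk_rep]
      rw [hqst, hTy]
    rotate_left 2
    · -- open_source
      exact hWopen.preimage hPcont
    · -- open_target
      exact hWopen.prod isOpen_univ
    · -- continuousOn_toFun
      intro e he
      apply ContinuousAt.continuousWithinAt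
      refine ContinuousAt.prodMk hPcont.continuousAt ?_
      obtain ⟨hb, hi⟩ := hsrc e he
      have hkey : ContinuousAt (fun e => (T (MTAux.rep φE t₀ e).1).2)
          ((Quotient.mk (mappingTorusSetoid φE)) (MTAux.rep φE t₀ e)) := by
        refine MTAux.continuousAt_descend (MTAux.isOpenMap_mk φE)
          (g := fun p : E × ℝ => (T p.1).2)
          (U := (π ⁻¹' T.baseSet) ×ˢ I)
          ((T.open_baseSet.preimage hπ.continuous).prod isOpen_Ioo) ?_ ?_ ⟨hb, hi⟩
        · intro p hp
          apply ContinuousAt.continuousWithinAt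
          have h1 : ContinuousAt (⇑T) p.1 :=
            T.toOpenPartialHomeomorph.continuousAt (hmem_source _ (Set.mem_prod.mp hp).1)
          exact (continuous_snd.continuousAt).comp (h1.comp continuous_fst.continuousAt)
        · rintro p ⟨-, hp2⟩
          show (T (MTAux.rep φE t₀ ((Quotient.mk (mappingTorusSetoid φE)) p)).1).2 = (T p.1).2
          rw [MTAux.rep_mk_of_mem φE hp2]
      rwa [MTAux.mk_rep φE t₀ e] at hkey
    · -- continuousOn_invFun
      rintro ⟨w, i⟩ ⟨hw, -⟩
      apply ContinuousAt.continuousWithinAt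
      obtain ⟨hb, hi⟩ := hrepW w hw
      have hkey : ContinuousAt invF
          ((fun p : (S × ℝ) × F => ((Quotient.mk (mappingTorusSetoid φ)) p.1, p.2)) (MTAux.rep φ t₀ w, i)) := by
        refine MTAux.continuousAt_descend (q := fun p : (S × ℝ) × F => ((Quotient.mk (mappingTorusSetoid φ)) p.1, p.2))
          ?_
          (g := fun p : (S × ℝ) × F =>
            (Quotient.mk (mappingTorusSetoid φE)) (T.toOpenPartialHomeomorph.symm (p.1.1, p.2), p.1.2))
          (U := (T.baseSet ×ˢ I) ×ˢ (Set.univ : Set F))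
          ((T.open_baseSet.prod isOpen_Ioo).prod isOpen_univ) ?_ ?_
          ⟨⟨hb, hi⟩, Set.mem_univ _⟩
        · exact (MTAux.isOpenMap_mk φ).prodMap IsOpenMap.id
        · intro p hp
          apply ContinuousAt.continuousWithinAt
          have hmem : (p.1.1, p.2) ∈ T.target := by
            rw [T.target_eq]
            exact ⟨(Set.mem_prod.mp (Set.mem_prod.mp hp).1).1, Set.mem_univ _⟩
          have h1 : ContinuousAt (⇑T.toOpenPartialHomeomorph.symm ∘
              (fun q : (S × ℝ) × F => (q.1.1, q.2))) p :=
            ContinuousAt.comp (f := fun q : (S × ℝ) × F => (q.1.1, q.2)) (x := p)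
              (T.toOpenPartialHomeomorph.symm.continuousAt hmem)
              ((continuous_fst.fst).prodMk continuous_snd).continuousAt
          exact ((MTAux.continuous_mk φE).continuousAt).comp
            (h1.prodMk (continuous_fst.snd).continuousAt)
        · rintro ⟨⟨s', t'⟩, i'⟩ ⟨⟨hs', ht'⟩, -⟩
          show invF ((Quotient.mk (mappingTorusSetoid φ)) (s', t'), i') = _
          rw [hinvF]
          simp only
          rw [MTAux.rep_mk_of_mem φ (p := (s', t')) ht']
      have hrw : (fun p : (S × ℝ) × F => ((Quotient.mk (mappingTorusSetoid φ)) p.1, p.2)) (MTAux.rep φ t₀ w, i) = (w, i) := by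
        simp only [MTAux.mk_rep]
        rfl
      rwa [hrw] at hkey
  · -- the base point is in the base set
    refine ⟨(p₀.1, t₀), ⟨hT, ?_⟩, ?_⟩
    · constructor <;> [linarith [show (0:ℝ) < 2⁻¹ by norm_num]; linarith [show (0:ℝ) < 2⁻¹ by norm_num]]
    · show (Quotient.mk (mappingTorusSetoid φ)) (p₀.1, p₀.2) = (Quotient.mk (mappingTorusSetoid φ)) p₀
      rfl
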